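/- No mixing on bad news in extremal equilibria of a binary experiment: let E = ({l,h}, p_L, p_H) be a binary experiment. If σ̂ is the most selective equilibrium strategy, then σ̂(l) ∈ {0,1}; and if σ̌ is the least selective equilibrium strategy, then σ̌(l) ∈ {0,1}. -/

import Mathlib

open Finset Filter Topology

noncomputable section

/-- Probability that a single buyer rejects the seller, given conditional signal
distribution `p` and strategy `σ`: `r_θ(σ) = 1 - Σ_s p_θ(s)·σ(s)`. -/
def rej {m : ℕ} (p σ : Fin m → ℝ) : ℝ := 1 - ∑ s, p s * σ s

/-- `ν_θ(σ) = (1/n)·Σ_{k=0}^{n-1} r_θ(σ)^k`: probability of being visited. -/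
def visit (n : ℕ) {m : ℕ} (p σ : Fin m → ℝ) : ℝ :=
  (1 / (n : ℝ)) * ∑ k ∈ Finset.range n, rej p σ ^ k

/-- Interim belief `Ψ(σ) = ρ·ν_H(σ) / (ρ·ν_H(σ) + (1-ρ)·ν_L(σ))`. -/
def interim (ρ : ℝ) (n : ℕ) {m : ℕ} (pL pH σ : Fin m → ℝ) : ℝ :=
  ρ * visit n pH σ / (ρ * visit n pH σ + (1 - ρ) * visit n pL σ)

/-- Posterior belief `Q_ψ(s) = ψ·p_H(s) / (ψ·p_H(s) + (1-ψ)·p_L(s))`. -/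
def post {m : ℕ} (ψ : ℝ) (pL pH : Fin m → ℝ) (s : Fin m) : ℝ :=
  ψ * pH s / (ψ * pH s + (1 - ψ) * pL s)

/-- A strategy maps each signal to an acceptance probability in `[0,1]`. -/
def IsStrategy {m : ℕ} (σ : Fin m → ℝ) : Prop := ∀ s, 0 ≤ σ s ∧ σ s ≤ 1

/-- `σ` is an equilibrium strategy: with `ψ* = Ψ(σ)`, accept for sure when the
posterior exceeds `c`, reject for sure when it falls below `c`. -/
def IsEquilibrium (ρ c : ℝ) (n : ℕ) {m : ℕ} (pL pH σ : Fin m → ℝ) : Prop :=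
  IsStrategy σ ∧
  ∀ s : Fin m,
    (c < post (interim ρ n pL pH σ) pL pH s → σ s = 1) ∧
    (post (interim ρ n pL pH σ) pL pH s < c → σ s = 0)

/-- Total surplus `Π(σ) = (1-c)·ρ·(1-r_H(σ)^n) - c·(1-ρ)·(1-r_L(σ)^n)`. -/
def surplus (ρ c : ℝ) (n : ℕ) {m : ℕ} (pL pH σ : Fin m → ℝ) : ℝ :=
  (1 - c) * ρ * (1 - rej pH σ ^ n) - c * (1 - ρ) * (1 - rej pL σ ^ n)

/-- The most selective equilibrium strategy. -/
def MostSelective (ρ c : ℝ) (n : ℕ) {m : ℕ} (pL pH σ : Fin m → ℝ) : Prop :=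
  IsEquilibrium ρ c n pL pH σ ∧
  ∀ σ' : Fin m → ℝ, IsEquilibrium ρ c n pL pH σ' → ∀ s, σ s ≤ σ' s

/-- The least selective equilibrium strategy. -/
def LeastSelective (ρ c : ℝ) (n : ℕ) {m : ℕ} (pL pH σ : Fin m → ℝ) : Prop :=
  IsEquilibrium ρ c n pL pH σ ∧
  ∀ σ' : Fin m → ℝ, IsEquilibrium ρ c n pL pH σ' → ∀ s, σ' s ≤ σ s

/-- An experiment: `p_L, p_H` are probability mass functions with full joint support,
indexed so that likelihood ratios are nondecreasing. -/
def IsExperiment {m : ℕ} (pL pH : Fin m → ℝ) : Prop :=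
  (∀ s, 0 ≤ pL s) ∧ (∀ s, 0 ≤ pH s) ∧
  (∑ s, pL s = 1) ∧ (∑ s, pH s = 1) ∧
  (∀ s, 0 < pL s + pH s) ∧
  (∀ i j : Fin m, i ≤ j → pH i * pL j ≤ pH j * pL i)

/-- A strategy is monotone: a positive acceptance probability at `s_i` forces sure
acceptance at every signal with strictly higher likelihood ratio. -/
def MonotoneStrategy {m : ℕ} (pL pH σ : Fin m → ℝ) : Prop :=
  ∀ i j : Fin m, 0 < σ i → pH i * pL j < pH j * pL i → σ j = 1

/-!
The equilibrium conditions only see the sign of `Q_{Ψ(σ)}(s) - c`, which is that of the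
division-free `acceptGain`. If an equilibrium `σ` mixes on the low signal, this gain vanishes there.
For an uninformative experiment (`p_L = p_H`) that forces `c = ρ`, and every strategy is an
equilibrium. Otherwise monotone likelihood ratios make the gain on the high signal positive, so
`σ = ![t, 1]` with `0 < t < 1`. Along the strategies `![t', 1]` the visit ratio `ν_H / ν_L`
increases with `t'` (a Chebyshev-type inequality for geometric sums), so the gain on the low signal
is `≥ 0` at `![1, 1]`, which is therefore an equilibrium, and `≤ 0` at `![0, 1]`; the intermediate
value theorem applied to the gain on the high signal along `![0, u]` then gives an equilibrium
rejecting the low signal. Pure equilibria on both sides of `σ` rule out `σ` being extremal.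
-/

theorem pow_mul_pow_le_pow_mul_pow {a b : ℝ} (hb : 0 ≤ b) (hab : b ≤ a) {j k : ℕ} (hjk : j ≤ k) :
    a ^ j * b ^ k ≤ a ^ k * b ^ j := by
  obtain ⟨d, rfl⟩ := Nat.exists_eq_add_of_le hjk
  calc a ^ j * b ^ (j + d) = a ^ j * b ^ j * b ^ d := by ring
    _ ≤ a ^ j * b ^ j * a ^ d :=
        mul_le_mul_of_nonneg_left (pow_le_pow_left₀ hb hab d)
          (mul_nonneg (pow_nonneg (hb.trans hab) j) (pow_nonneg hb j))
    _ = a ^ (j + d) * b ^ j := by ring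

/-- For `0 ≤ b ≤ a`, the ratio `∑ (b x)^k / ∑ (a x)^k` is antitone in `x ≥ 0`. -/
theorem geom_sum_mul_geom_sum_le {a b u v : ℝ} (hb : 0 ≤ b) (hab : b ≤ a) (hu : 0 ≤ u)
    (huv : u ≤ v) (n : ℕ) :
    (∑ k ∈ range n, (a * u) ^ k) * ∑ k ∈ range n, (b * v) ^ k ≤
      (∑ k ∈ range n, (b * u) ^ k) * ∑ k ∈ range n, (a * v) ^ k := by
  set T : ℕ → ℕ → ℝ := fun j k => (b * u) ^ j * (a * v) ^ k - (a * u) ^ j * (b * v) ^ k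
  have hdiff : (∑ k ∈ range n, (b * u) ^ k) * (∑ k ∈ range n, (a * v) ^ k) -
      (∑ k ∈ range n, (a * u) ^ k) * (∑ k ∈ range n, (b * v) ^ k) =
      ∑ j ∈ range n, ∑ k ∈ range n, T j k := by
    simp only [T, sum_mul_sum, ← sum_sub_distrib]
  -- symmetrising `T` gives a product of two factors with the same sign
  have hpair : ∀ j k, 0 ≤ T j k + T k j := by
    intro j k
    have hT : T j k + T k j = (a ^ k * b ^ j - a ^ j * b ^ k) * (v ^ k * u ^ j - v ^ j * u ^ k) := by
      simp only [T]; ring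
    rw [hT]
    rcases le_total j k with h | h
    · exact mul_nonneg (sub_nonneg.2 (pow_mul_pow_le_pow_mul_pow hb hab h))
        (sub_nonneg.2 (pow_mul_pow_le_pow_mul_pow hu huv h))
    · exact mul_nonneg_of_nonpos_of_nonpos (sub_nonpos.2 (pow_mul_pow_le_pow_mul_pow hb hab h))
        (sub_nonpos.2 (pow_mul_pow_le_pow_mul_pow hu huv h))
  have hsym : 0 ≤ ∑ j ∈ range n, ∑ k ∈ range n, (T j k + T k j) :=
    sum_nonneg fun j _ => sum_nonneg fun k _ => hpair j k
  simp only [sum_add_distrib] at hsym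
  rw [sum_comm (f := fun k j => T j k)] at hsym
  linarith

section Market

variable {m n : ℕ} {ρ c : ℝ} {pL pH : Fin m → ℝ}

theorem rej_nonneg {p σ : Fin m → ℝ} (hp : ∀ s, 0 ≤ p s) (hps : ∑ s, p s = 1)
    (hσ : IsStrategy σ) : 0 ≤ rej p σ := by
  have : ∑ s, p s * σ s ≤ ∑ s, p s :=
    sum_le_sum fun s _ => mul_le_of_le_one_right (hp s) (hσ s).2
  rw [rej]
  linarith

theorem visit_pos {p σ : Fin m → ℝ} (hn : 1 ≤ n) (hp : ∀ s, 0 ≤ p s) (hps : ∑ s, p s = 1)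
    (hσ : IsStrategy σ) : 0 < visit n p σ := by
  have hsum : 0 < ∑ k ∈ range n, rej p σ ^ k :=
    sum_pos' (fun k _ => pow_nonneg (rej_nonneg hp hps hσ) k) ⟨0, mem_range.2 hn, by simp⟩
  have hn' : (0 : ℝ) < n := by exact_mod_cast hn
  exact mul_pos (one_div_pos.2 hn') hsum

/-- `Q_{Ψ(σ)}(s) - c` multiplied by the (positive) denominator `ρ ν_H p_H(s) + (1-ρ) ν_L p_L(s)`
of the posterior. -/
def acceptGain (ρ c : ℝ) (n : ℕ) (pL pH σ : Fin m → ℝ) (s : Fin m) : ℝ :=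
  (1 - c) * ρ * visit n pH σ * pH s - c * (1 - ρ) * visit n pL σ * pL s

theorem continuous_acceptGain (s : Fin m) :
    Continuous fun σ => acceptGain ρ c n pL pH σ s := by
  unfold acceptGain visit rej
  fun_prop

theorem post_interim_eq {σ : Fin m → ℝ}
    (h : ρ * visit n pH σ + (1 - ρ) * visit n pL σ ≠ 0) (s : Fin m) :
    post (interim ρ n pL pH σ) pL pH s =
      ρ * visit n pH σ * pH s / (ρ * visit n pH σ * pH s + (1 - ρ) * visit n pL σ * pL s) := by
  unfold post interim
  set A := ρ * visit n pH σ
  set B := (1 - ρ) * visit n pL σ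
  have hB : 1 - A / (A + B) = B / (A + B) := by field_simp; ring
  rw [hB, div_mul_eq_mul_div, div_mul_eq_mul_div, ← add_div, div_div_div_cancel_right₀ h]

theorem post_interim_denom_pos (hρ : ρ ∈ Set.Ioo (0 : ℝ) 1) (hn : 1 ≤ n)
    (hE : IsExperiment pL pH) {σ : Fin m → ℝ} (hσ : IsStrategy σ) (s : Fin m) :
    0 < ρ * visit n pH σ * pH s + (1 - ρ) * visit n pL σ * pL s := by
  obtain ⟨hL, hH, hLs, hHs, hsupp, -⟩ := hE
  have hA : 0 < ρ * visit n pH σ := mul_pos hρ.1 (visit_pos hn hH hHs hσ)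
  have hB : 0 < (1 - ρ) * visit n pL σ := mul_pos (sub_pos.2 hρ.2) (visit_pos hn hL hLs hσ)
  rcases (hH s).eq_or_lt with hH0 | hHpos
  · rw [← hH0, mul_zero, zero_add]
    exact mul_pos hB (by linarith [hsupp s])
  · exact add_pos_of_pos_of_nonneg (mul_pos hA hHpos) (mul_nonneg hB.le (hL s))

theorem post_interim_sub_eq (hρ : ρ ∈ Set.Ioo (0 : ℝ) 1) (hn : 1 ≤ n)
    (hE : IsExperiment pL pH) {σ : Fin m → ℝ} (hσ : IsStrategy σ) (s : Fin m) :
    post (interim ρ n pL pH σ) pL pH s - c = acceptGain ρ c n pL pH σ s /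
      (ρ * visit n pH σ * pH s + (1 - ρ) * visit n pL σ * pL s) := by
  have hAB : 0 < ρ * visit n pH σ + (1 - ρ) * visit n pL σ :=
    add_pos (mul_pos hρ.1 (visit_pos hn hE.2.1 hE.2.2.2.1 hσ))
      (mul_pos (sub_pos.2 hρ.2) (visit_pos hn hE.1 hE.2.2.1 hσ))
  rw [post_interim_eq hAB.ne', div_sub' (post_interim_denom_pos hρ hn hE hσ s).ne', acceptGain]
  ring

theorem isEquilibrium_iff (hρ : ρ ∈ Set.Ioo (0 : ℝ) 1) (hn : 1 ≤ n) (hE : IsExperiment pL pH)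
    {σ : Fin m → ℝ} :
    IsEquilibrium ρ c n pL pH σ ↔ IsStrategy σ ∧ ∀ s,
      (0 < acceptGain ρ c n pL pH σ s → σ s = 1) ∧ (acceptGain ρ c n pL pH σ s < 0 → σ s = 0) := by
  refine and_congr_right fun hσ => forall_congr' fun s => ?_
  have hden := post_interim_denom_pos hρ hn hE hσ s
  rw [← sub_neg (b := c), ← sub_pos (b := c), post_interim_sub_eq hρ hn hE hσ s,
    div_pos_iff_of_pos_right hden, div_lt_iff₀ hden, zero_mul]

theorem acceptGain_eq_zero_of_mixed (hρ : ρ ∈ Set.Ioo (0 : ℝ) 1) (hn : 1 ≤ n)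
    (hE : IsExperiment pL pH) {σ : Fin m → ℝ} (hσ : IsEquilibrium ρ c n pL pH σ) {s : Fin m}
    (h0 : 0 < σ s) (h1 : σ s < 1) : acceptGain ρ c n pL pH σ s = 0 := by
  obtain ⟨-, hσ⟩ := (isEquilibrium_iff hρ hn hE).1 hσ
  exact le_antisymm (not_lt.1 fun h => h1.ne ((hσ s).1 h))
    (not_lt.1 fun h => h0.ne' ((hσ s).2 h))

theorem acceptGain_pos_of_nonneg (hρ : 0 < ρ) (hc : c < 1) {σ : Fin m → ℝ}
    (hνH : 0 < visit n pH σ) (hL : ∀ s, 0 ≤ pL s) {i j : Fin m}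
    (hij : pH i * pL j < pH j * pL i) (hi : 0 ≤ acceptGain ρ c n pL pH σ i) :
    0 < acceptGain ρ c n pL pH σ j := by
  set α := (1 - c) * ρ * visit n pH σ
  set β := c * (1 - ρ) * visit n pL σ
  have hα : 0 < α := mul_pos (mul_pos (sub_pos.2 hc) hρ) hνH
  change 0 ≤ α * pH i - β * pL i at hi
  change 0 < α * pH j - β * pL j
  have : 0 < pL i * (α * pH j - β * pL j) := by
    nlinarith [mul_lt_mul_of_pos_left hij hα, mul_nonneg hi (hL j)]
  exact pos_of_mul_pos_right this (hL i)

theorem acceptGain_mul_visit_le (hρ : 0 ≤ ρ) (hc : c ≤ 1) {σ τ : Fin m → ℝ} {s : Fin m}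
    (hH : 0 ≤ pH s) (hν : visit n pH σ * visit n pL τ ≤ visit n pH τ * visit n pL σ) :
    acceptGain ρ c n pL pH σ s * visit n pL τ ≤ acceptGain ρ c n pL pH τ s * visit n pL σ := by
  have hcoef : 0 ≤ (1 - c) * ρ * pH s := mul_nonneg (mul_nonneg (sub_nonneg.2 hc) hρ) hH
  have key : acceptGain ρ c n pL pH τ s * visit n pL σ - acceptGain ρ c n pL pH σ s * visit n pL τ
      = (1 - c) * ρ * pH s * (visit n pH τ * visit n pL σ - visit n pH σ * visit n pL τ) := by
    unfold acceptGain; ring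
  nlinarith [mul_nonneg hcoef (sub_nonneg.2 hν)]

theorem acceptGain_self (p σ : Fin m → ℝ) (s : Fin m) :
    acceptGain ρ c n p p σ s = (ρ - c) * visit n p σ * p s := by
  unfold acceptGain; ring

theorem isEquilibrium_of_mixed_of_uninformative {p σ τ : Fin m → ℝ} (hρ : ρ ∈ Set.Ioo (0 : ℝ) 1)
    (hn : 1 ≤ n) (hE : IsExperiment p p) (hσ : IsEquilibrium ρ c n p p σ) {s : Fin m}
    (h0 : 0 < σ s) (h1 : σ s < 1) (hτ : IsStrategy τ) : IsEquilibrium ρ c n p p τ := by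
  have hgain := acceptGain_eq_zero_of_mixed hρ hn hE hσ h0 h1
  have hνσ : 0 < visit n p σ := visit_pos hn hE.1 hE.2.2.1 hσ.1
  have hps : 0 < p s := by linarith [hE.2.2.2.2.1 s]
  have hcρ : ρ = c := by
    rw [acceptGain_self] at hgain
    have := (mul_eq_zero.1 hgain).resolve_right hps.ne'
    linarith [(mul_eq_zero.1 this).resolve_right hνσ.ne']
  refine (isEquilibrium_iff hρ hn hE).2 ⟨hτ, fun s' => ?_⟩
  simp only [acceptGain_self, hcρ, sub_self, zero_mul, lt_irrefl, IsEmpty.forall_iff, and_self]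

end Market

theorem exists_mem_Icc_eq_one_of_pos_eq_zero_of_neg {f : ℝ → ℝ}
    (hf : ContinuousOn f (Set.Icc 0 1)) :
    ∃ u ∈ Set.Icc (0 : ℝ) 1, (0 < f u → u = 1) ∧ (f u < 0 → u = 0) := by
  by_cases h1 : 0 ≤ f 1
  · exact ⟨1, Set.right_mem_Icc.2 zero_le_one, fun _ => rfl, fun h => absurd h (not_lt.2 h1)⟩
  by_cases h0 : f 0 ≤ 0
  · exact ⟨0, Set.left_mem_Icc.2 zero_le_one, fun h => absurd h (not_lt.2 h0), fun _ => rfl⟩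
  obtain ⟨u, hu, hfu⟩ := intermediate_value_Icc' zero_le_one hf
    ⟨(not_le.1 h1).le, (not_le.1 h0).le⟩
  exact ⟨u, hu, fun h => absurd hfu h.ne', fun h => absurd hfu h.ne⟩

section Binary

variable {n : ℕ} {ρ c : ℝ} {pL pH : Fin 2 → ℝ}

theorem eq_of_mul_eq_mul_of_sum_eq_one {p q : Fin 2 → ℝ} (hp : ∑ s, p s = 1)
    (hq : ∑ s, q s = 1) (h : q 0 * p 1 = q 1 * p 0) : p = q := by
  rw [Fin.sum_univ_two] at hp hq
  have h0 : p 0 = q 0 := by linear_combination -h + q 0 * hp - p 0 * hq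
  ext s
  fin_cases s
  · exact h0
  · simp only [Fin.mk_one, Fin.isValue]
    linarith

theorem pH_zero_le_pL_zero (hE : IsExperiment pL pH) : pH 0 ≤ pL 0 := by
  have hmlr := hE.2.2.2.2.2 0 1 (by decide)
  have hL := hE.2.2.1
  have hH := hE.2.2.2.1
  rw [Fin.sum_univ_two] at hL hH
  linear_combination hmlr + pL 0 * hH - pH 0 * hL

theorem isStrategy_vec {t u : ℝ} (ht : t ∈ Set.Icc (0 : ℝ) 1) (hu : u ∈ Set.Icc (0 : ℝ) 1) :
    IsStrategy ![t, u] := by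
  intro s
  fin_cases s
  exacts [ht, hu]

theorem rej_vec_one {p : Fin 2 → ℝ} (hp : ∑ s, p s = 1) (t : ℝ) : rej p ![t, 1] = p 0 * (1 - t) := by
  rw [Fin.sum_univ_two] at hp
  simp only [rej, Fin.sum_univ_two, Matrix.cons_val_zero, Matrix.cons_val_one]
  linear_combination -hp

theorem visit_mul_visit_le_of_le (hE : IsExperiment pL pH) {t t' : ℝ} (htt' : t ≤ t')
    (ht' : t' ≤ 1) :
    visit n pH ![t, 1] * visit n pL ![t', 1] ≤ visit n pH ![t', 1] * visit n pL ![t, 1] := by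
  have key := geom_sum_mul_geom_sum_le (hE.2.1 0) (pH_zero_le_pL_zero hE) (sub_nonneg.2 ht')
    (sub_le_sub_left htt' 1) n
  simp only [visit, rej_vec_one hE.2.2.1, rej_vec_one hE.2.2.2.1]
  nlinarith [mul_le_mul_of_nonneg_left key (sq_nonneg (1 / (n : ℝ)))]

theorem exists_isEquilibrium_apply_zero_eq_zero (hρ : ρ ∈ Set.Ioo (0 : ℝ) 1) (hc : c < 1)
    (hn : 1 ≤ n) (hE : IsExperiment pL pH) (hstrict : pH 0 * pL 1 < pH 1 * pL 0)
    (hlow : acceptGain ρ c n pL pH ![0, 1] 0 ≤ 0) :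
    ∃ σ, IsEquilibrium ρ c n pL pH σ ∧ σ 0 = 0 := by
  obtain ⟨u, hu, hpos, hneg⟩ := exists_mem_Icc_eq_one_of_pos_eq_zero_of_neg
    ((continuous_acceptGain 1).comp (by fun_prop : Continuous fun u : ℝ => ![0, u])).continuousOn
  have hτ := isStrategy_vec (Set.left_mem_Icc.2 zero_le_one) hu
  have hgain0 : acceptGain ρ c n pL pH ![0, u] 0 ≤ 0 := by
    rcases eq_or_ne u 1 with rfl | hu1
    · exact hlow
    · by_contra! h
      exact hu1 (hpos (acceptGain_pos_of_nonneg hρ.1 hc (visit_pos hn hE.2.1 hE.2.2.2.1 hτ) hE.1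
        hstrict h.le))
  refine ⟨![0, u], (isEquilibrium_iff hρ hn hE).2 ⟨hτ, fun s => ?_⟩, rfl⟩
  fin_cases s
  · exact ⟨fun h => absurd h (not_lt.2 hgain0), fun _ => rfl⟩
  · exact ⟨hpos, hneg⟩

theorem exists_pure_equilibria_of_mixed_of_strict (hρ : ρ ∈ Set.Ioo (0 : ℝ) 1) (hc : c < 1)
    (hn : 1 ≤ n) (hE : IsExperiment pL pH) (hstrict : pH 0 * pL 1 < pH 1 * pL 0)
    {σ : Fin 2 → ℝ} (hσ : IsEquilibrium ρ c n pL pH σ) (h0 : 0 < σ 0) (h1 : σ 0 < 1) :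
    (∃ σ', IsEquilibrium ρ c n pL pH σ' ∧ σ' 0 = 0) ∧
      (∃ σ', IsEquilibrium ρ c n pL pH σ' ∧ σ' 0 = 1) := by
  have hνH : ∀ τ, IsStrategy τ → 0 < visit n pH τ := fun τ => visit_pos hn hE.2.1 hE.2.2.2.1
  have hνL : ∀ τ, IsStrategy τ → 0 < visit n pL τ := fun τ => visit_pos hn hE.1 hE.2.2.1
  have hg0 := acceptGain_eq_zero_of_mixed hρ hn hE hσ h0 h1
  have hσ1 : σ 1 = 1 := (((isEquilibrium_iff hρ hn hE).1 hσ).2 1).1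
    (acceptGain_pos_of_nonneg hρ.1 hc (hνH σ hσ.1) hE.1 hstrict hg0.ge)
  have hσvec : σ = ![σ 0, 1] := by
    ext s
    fin_cases s
    exacts [rfl, hσ1]
  have hs11 := isStrategy_vec (Set.right_mem_Icc.2 zero_le_one) (Set.right_mem_Icc.2 zero_le_one)
  have hlow : acceptGain ρ c n pL pH ![0, 1] 0 ≤ 0 := by
    have hν : visit n pH ![0, 1] * visit n pL σ ≤ visit n pH σ * visit n pL ![0, 1] := by
      rw [hσvec]
      exact visit_mul_visit_le_of_le hE h0.le h1.le
    have h := acceptGain_mul_visit_le (s := 0) hρ.1.le hc.le (hE.2.1 0) hν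
    rw [hg0, zero_mul] at h
    exact nonpos_of_mul_nonpos_left h (hνL σ hσ.1)
  have hhigh : 0 ≤ acceptGain ρ c n pL pH ![1, 1] 0 := by
    have hν : visit n pH σ * visit n pL ![1, 1] ≤ visit n pH ![1, 1] * visit n pL σ := by
      rw [hσvec]
      exact visit_mul_visit_le_of_le hE h1.le le_rfl
    have h := acceptGain_mul_visit_le (s := 0) hρ.1.le hc.le (hE.2.1 0) hν
    rw [hg0, zero_mul] at h
    exact nonneg_of_mul_nonneg_left h (hνL σ hσ.1)
  refine ⟨exists_isEquilibrium_apply_zero_eq_zero hρ hc hn hE hstrict hlow,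
    ![1, 1], (isEquilibrium_iff hρ hn hE).2 ⟨hs11, fun s => ?_⟩, rfl⟩
  fin_cases s
  · exact ⟨fun _ => rfl, fun h => absurd h (not_lt.2 hhigh)⟩
  · exact ⟨fun _ => rfl, fun h => absurd h (not_lt.2
      (acceptGain_pos_of_nonneg hρ.1 hc (hνH _ hs11) hE.1 hstrict hhigh).le)⟩

theorem exists_pure_equilibria_of_mixed (hρ : ρ ∈ Set.Ioo (0 : ℝ) 1) (hc : c < 1)
    (hn : 1 ≤ n) (hE : IsExperiment pL pH) {σ : Fin 2 → ℝ} (hσ : IsEquilibrium ρ c n pL pH σ)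
    (h0 : 0 < σ 0) (h1 : σ 0 < 1) :
    (∃ σ', IsEquilibrium ρ c n pL pH σ' ∧ σ' 0 = 0) ∧
      (∃ σ', IsEquilibrium ρ c n pL pH σ' ∧ σ' 0 = 1) := by
  rcases (hE.2.2.2.2.2 0 1 (by decide)).lt_or_eq with hstrict | hflat
  · exact exists_pure_equilibria_of_mixed_of_strict hρ hc hn hE hstrict hσ h0 h1
  · obtain rfl := eq_of_mul_eq_mul_of_sum_eq_one hE.2.2.1 hE.2.2.2.1 hflat
    have h01 : (0 : ℝ) ∈ Set.Icc 0 1 := Set.left_mem_Icc.2 zero_le_one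
    have h11 : (1 : ℝ) ∈ Set.Icc 0 1 := Set.right_mem_Icc.2 zero_le_one
    exact ⟨⟨![0, 0], isEquilibrium_of_mixed_of_uninformative hρ hn hE hσ h0 h1
        (isStrategy_vec h01 h01), rfl⟩,
      ⟨![1, 1], isEquilibrium_of_mixed_of_uninformative hρ hn hE hσ h0 h1
        (isStrategy_vec h11 h11), rfl⟩⟩

end Binary

/-- no mixing on bad news in extremal equilibria of a binary experiment
(`0` is the low signal, `1` the high signal): the most and the least selective
equilibrium strategies accept on the low signal with probability `0` or `1`. -/
theorem no_mixing_on_bad_news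
    (ρ c : ℝ) (hρ : ρ ∈ Set.Ioo (0:ℝ) 1) (hc : c ∈ Set.Ioo (0:ℝ) 1)
    (n : ℕ) (hn : 1 ≤ n)
    (pL pH : Fin 2 → ℝ) (hE : IsExperiment pL pH) :
    (∀ σhat : Fin 2 → ℝ, MostSelective ρ c n pL pH σhat →
      σhat 0 = 0 ∨ σhat 0 = 1) ∧
    (∀ σcheck : Fin 2 → ℝ, LeastSelective ρ c n pL pH σcheck →
      σcheck 0 = 0 ∨ σcheck 0 = 1) := by
  constructor
  · rintro σ ⟨hσ, hmin⟩
    rcases (hσ.1 0).1.eq_or_lt with h0 | h0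
    · exact Or.inl h0.symm
    rcases (hσ.1 0).2.eq_or_lt with h1 | h1
    · exact Or.inr h1
    obtain ⟨⟨σ', hσ', hσ'0⟩, -⟩ := exists_pure_equilibria_of_mixed hρ hc.2 hn hE hσ h0 h1
    linarith [hmin σ' hσ' 0]
  · rintro σ ⟨hσ, hmax⟩
    rcases (hσ.1 0).1.eq_or_lt with h0 | h0
    · exact Or.inl h0.symm
    rcases (hσ.1 0).2.eq_or_lt with h1 | h1
    · exact Or.inr h1
    obtain ⟨-, ⟨σ', hσ', hσ'0⟩⟩ := exists_pure_equilibria_of_mixed hρ hc.2 hn hE hσ h0 h1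
    linarith [hmax σ' hσ' 0]
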